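/- Let f_G : ℝ³ → ℝ be the Gyroid function f_G(x, y, z) = cos(2πx)·sin(2πy) + cos(2πy)·sin(2πz) + cos(2πz)·sin(2πx), let Y = [0,1]³, and define ϱ(α) = vol({ y ∈ Y : |f_G(y)| ≤ α }) for α ≥ 0. Then ϱ is strictly increasing on the interval [0, 3/2]; in particular, ϱ is a bijection from [0, 3/2] onto [ϱ(0), 1] and admits an inverse map ϱ^{-1} from volume fractions to thickness parameters. -/

import Mathlib

open MeasureTheory

/-- The Gyroid function
`f_G(x, y, z) = cos(2πx) sin(2πy) + cos(2πy) sin(2πz) + cos(2πz) sin(2πx)`. -/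
noncomputable def gyroid (p : Fin 3 → ℝ) : ℝ :=
  Real.cos (2 * Real.pi * p 0) * Real.sin (2 * Real.pi * p 1) +
  Real.cos (2 * Real.pi * p 1) * Real.sin (2 * Real.pi * p 2) +
  Real.cos (2 * Real.pi * p 2) * Real.sin (2 * Real.pi * p 0)

/-- The unit periodicity cell `Y = [0,1]³`. -/
noncomputable def unitCell : Set (Fin 3 → ℝ) := Set.Icc 0 1

/-- The volume fraction `ϱ(α) = vol({ y ∈ Y : |f_G(y)| ≤ α })` of the Gyroid scaffold of
thickness parameter `α`. -/
noncomputable def scaffoldVolume (α : ℝ) : ℝ :=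
  (volume {y : Fin 3 → ℝ | y ∈ unitCell ∧ |gyroid y| ≤ α}).toReal

/-!
`ϱ` is the cumulative distribution function of the law of `|f_G|` under Lebesgue measure on `Y`,
a probability measure on `ℝ`. That CDF is continuous because the law has no atoms: the level sets
of `f_G` are null by Fubini, since for almost every `(y, z)` the equation `f_G(x, y, z) = c` reads
`A cos 2πx + B sin 2πx = C` with `A = sin 2πy ≠ 0`, which has countably many solutions. It is
strictly increasing on `[0, 3/2]` because the law charges every `(a, b] ⊆ [0, 3/2]`: the open set
`{y ∈ (0,1)³ : a < |f_G(y)| < b}` contains a diagonal point, as `f_G(t,t,t) = (3/2) sin 4πt`.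
Since `|f_G| ≤ 3/2`, `ϱ(3/2) = 1`, and the intermediate value theorem gives bijectivity.
-/

open Real Set Filter Topology ProbabilityTheory

theorem StrictMonoOn.bijOn_Icc {α δ : Type*} [ConditionallyCompleteLinearOrder α]
    [TopologicalSpace α] [OrderTopology α] [DenselyOrdered α] [LinearOrder δ]
    [TopologicalSpace δ] [OrderClosedTopology δ] {f : α → δ} {a b : α} (hab : a ≤ b)
    (hf : StrictMonoOn f (Icc a b)) (hc : ContinuousOn f (Icc a b)) :
    BijOn f (Icc a b) (Icc (f a) (f b)) :=
  ⟨hf.monotoneOn.mapsTo_Icc, hf.injOn, intermediate_value_Icc hab hc⟩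

namespace ProbabilityTheory

variable (μ : Measure ℝ) [IsProbabilityMeasure μ]

theorem continuous_cdf [NullSingletonClass μ] : Continuous (cdf μ) := by
  refine continuous_iff_continuousAt.2 fun a ↦ continuousAt_iff_continuous_left'_right'.2
    ⟨?_, continuousWithinAt_Ioi_iff_Ici.2 ((cdf μ).right_continuous a)⟩
  rw [(monotone_cdf μ).continuousWithinAt_Iio_iff_leftLim_eq]
  have h := (cdf μ).measure_singleton a
  rw [measure_cdf, measure_singleton, eq_comm, ENNReal.ofReal_eq_zero] at h
  linarith [(monotone_cdf μ).leftLim_le (le_refl a)]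

theorem cdf_lt_cdf_of_measure_Ioc_pos {a b : ℝ} (h : 0 < μ (Ioc a b)) : cdf μ a < cdf μ b := by
  rw [← measure_cdf μ, StieltjesFunction.measure_Ioc, ENNReal.ofReal_pos] at h
  linarith

end ProbabilityTheory

theorem countable_setOf_cos_eq (c : ℝ) : {x : ℝ | cos x = c}.Countable := by
  rcases {x : ℝ | cos x = c}.eq_empty_or_nonempty with h | ⟨u, hu⟩
  · simp [h]
  refine ((countable_range fun k : ℤ ↦ 2 * k * π + u).union
    (countable_range fun k : ℤ ↦ 2 * k * π - u)).mono fun x hx ↦ ?_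
  obtain ⟨k, hk | hk⟩ := cos_eq_cos_iff.1 (hu.trans hx.symm)
  exacts [Or.inl ⟨k, hk.symm⟩, Or.inr ⟨k, hk.symm⟩]

theorem countable_setOf_mul_cos_add_mul_sin_eq {A B : ℝ} (h : A ≠ 0 ∨ B ≠ 0) (C : ℝ) :
    {x : ℝ | A * cos x + B * sin x = C}.Countable := by
  set z : ℂ := ⟨A, B⟩
  have hz : ‖z‖ ≠ 0 := norm_ne_zero_iff.2 fun h0 ↦ by simp_all [z, Complex.ext_iff]
  have phase (x : ℝ) : A * cos x + B * sin x = ‖z‖ * cos (x - z.arg) := by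
    linear_combination (-cos x) * Complex.norm_mul_cos_arg z - sin x * Complex.norm_mul_sin_arg z
      - ‖z‖ * cos_sub x z.arg
  have hset : {x : ℝ | A * cos x + B * sin x = C} = (· - z.arg) ⁻¹' {y | cos y = C / ‖z‖} := by
    ext x
    simp [phase, eq_div_iff hz, mul_comm]
  rw [hset]
  exact (countable_setOf_cos_eq _).preimage sub_left_injective

theorem volume_eq_zero_of_ae_volume_cons_eq_zero {n : ℕ} {S : Set (Fin (n + 1) → ℝ)}
    (hS : MeasurableSet S) (h : ∀ᵐ q : Fin n → ℝ, volume {x : ℝ | Fin.cons x q ∈ S} = 0) :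
    volume S = 0 := by
  have e := (volume_preserving_piFinSuccAbove (fun _ : Fin (n + 1) ↦ ℝ) 0).symm
  rw [← e.measure_preimage hS.nullMeasurableSet, Measure.volume_eq_prod,
    Measure.prod_apply_symm (e.measurable hS)]
  refine (lintegral_congr_ae ?_).trans lintegral_zero
  filter_upwards [h] with q hq
  convert hq using 3
  ext x
  simp [MeasurableEquiv.piFinSuccAbove_symm_apply, Fin.insertNthEquiv, Fin.insertNth_zero']

theorem continuous_gyroid : Continuous gyroid := by
  unfold gyroid
  fun_prop

theorem gyroid_cons (x : ℝ) (q : Fin 2 → ℝ) :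
    gyroid (Fin.cons x q) = sin (2 * π * q 0) * cos (2 * π * x) +
      cos (2 * π * q 1) * sin (2 * π * x) + cos (2 * π * q 0) * sin (2 * π * q 1) := by
  simp only [gyroid, Fin.cons_zero, Fin.cons_one]
  rw [show (Fin.cons x q : Fin 3 → ℝ) 2 = q 1 from rfl]
  ring

theorem volume_gyroid_preimage_singleton (c : ℝ) : volume (gyroid ⁻¹' {c}) = 0 := by
  refine volume_eq_zero_of_ae_volume_cons_eq_zero
    (continuous_gyroid.measurable (measurableSet_singleton c)) ?_
  have two_pi_mul_injective : Function.Injective (2 * π * · : ℝ → ℝ) :=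
    mul_right_injective₀ two_pi_pos.ne'
  have hsin : ∀ᵐ q : Fin 2 → ℝ, sin (2 * π * q 0) ≠ 0 := by
    have hzero : {t : ℝ | sin (2 * π * t) = 0}.Countable :=
      ((countable_range fun n : ℤ ↦ n * π).mono fun x hx ↦ sin_eq_zero_iff.1 hx).preimage
        two_pi_mul_injective
    simp only [ae_iff, not_not, volume_pi]
    exact Measure.pi_eval_preimage_null (μ := fun _ : Fin 2 ↦ (volume : Measure ℝ)) (i := 0)
      (hzero.measure_zero _)
  filter_upwards [hsin] with q hq
  have hslice : {x : ℝ | Fin.cons x q ∈ gyroid ⁻¹' {c}} = (2 * π * ·) ⁻¹'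
      {u | sin (2 * π * q 0) * cos u + cos (2 * π * q 1) * sin u =
        c - cos (2 * π * q 0) * sin (2 * π * q 1)} := by
    ext x
    simp only [mem_ofPred_eq, mem_preimage, mem_singleton_iff, gyroid_cons]
    constructor <;> intro h <;> linarith
  rw [hslice]
  exact ((countable_setOf_mul_cos_add_mul_sin_eq (Or.inl hq) _).preimage
    two_pi_mul_injective).measure_zero _

-- `3 ∓ 2 f_G(p)` is the sum of the squares `(cos 2πpᵢ ± sin 2πpᵢ₊₁)²`.
theorem abs_gyroid_le (p : Fin 3 → ℝ) : |gyroid p| ≤ 3 / 2 := by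
  have h0 := sin_sq_add_cos_sq (2 * π * p 0)
  have h1 := sin_sq_add_cos_sq (2 * π * p 1)
  have h2 := sin_sq_add_cos_sq (2 * π * p 2)
  unfold gyroid
  rw [abs_le]
  constructor
  · nlinarith [sq_nonneg (cos (2 * π * p 0) + sin (2 * π * p 1)),
      sq_nonneg (cos (2 * π * p 1) + sin (2 * π * p 2)),
      sq_nonneg (cos (2 * π * p 2) + sin (2 * π * p 0))]
  · nlinarith [sq_nonneg (cos (2 * π * p 0) - sin (2 * π * p 1)),
      sq_nonneg (cos (2 * π * p 1) - sin (2 * π * p 2)),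
      sq_nonneg (cos (2 * π * p 2) - sin (2 * π * p 0))]

theorem gyroid_const (t : ℝ) : gyroid (fun _ ↦ t) = 3 / 2 * sin (2 * (2 * π * t)) := by
  simp only [gyroid, sin_two_mul]
  ring

theorem exists_gyroid_const_eq {γ : ℝ} (h0 : 0 < γ) (h1 : γ ≤ 3 / 2) :
    ∃ t ∈ Ioo (0 : ℝ) 1, gyroid (fun _ ↦ t) = γ := by
  refine ⟨arcsin (2 / 3 * γ) / (4 * π),
    ⟨div_pos (arcsin_pos.2 (by positivity)) (by positivity), ?_⟩, ?_⟩
  · rw [div_lt_one (by positivity)]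
    linarith [arcsin_le_pi_div_two (2 / 3 * γ), pi_pos]
  · rw [gyroid_const, show 2 * (2 * π * (arcsin (2 / 3 * γ) / (4 * π))) = arcsin (2 / 3 * γ) by
      field_simp; ring, sin_arcsin (by linarith) (by linarith)]
    ring

instance : IsProbabilityMeasure (volume.restrict unitCell) :=
  ⟨by simp [unitCell, Real.volume_Icc_pi]⟩

noncomputable def absGyroidLaw : Measure ℝ := (volume.restrict unitCell).map (|gyroid ·|)

theorem measurable_abs_gyroid : Measurable (|gyroid ·|) := continuous_gyroid.abs.measurable

theorem absGyroidLaw_apply {s : Set ℝ} (hs : MeasurableSet s) :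
    absGyroidLaw s = volume ((|gyroid ·|) ⁻¹' s ∩ unitCell) := by
  rw [absGyroidLaw, Measure.map_apply measurable_abs_gyroid hs,
    Measure.restrict_apply (measurable_abs_gyroid hs)]

instance : IsProbabilityMeasure absGyroidLaw :=
  Measure.isProbabilityMeasure_map measurable_abs_gyroid.aemeasurable

instance : NullSingletonClass absGyroidLaw where
  measure_singleton a := by
    rw [absGyroidLaw_apply (measurableSet_singleton a)]
    refine measure_mono_null (fun y hy ↦ ?_) (measure_union_null
      (volume_gyroid_preimage_singleton a) (volume_gyroid_preimage_singleton (-a)))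
    exact eq_or_eq_neg_of_abs_eq hy.1

theorem scaffoldVolume_eq_cdf : scaffoldVolume = cdf absGyroidLaw := by
  ext α
  rw [cdf_eq_real, measureReal_def, absGyroidLaw_apply measurableSet_Iic, inter_comm]
  rfl

theorem scaffoldVolume_three_halves : scaffoldVolume (3 / 2) = 1 := by
  rw [scaffoldVolume_eq_cdf, cdf_eq_real, measureReal_def, absGyroidLaw,
    Measure.map_apply measurable_abs_gyroid measurableSet_Iic,
    show (|gyroid ·|) ⁻¹' Iic (3 / 2) = univ from eq_univ_of_forall abs_gyroid_le,
    measure_univ, ENNReal.toReal_one]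

theorem absGyroidLaw_Ioc_pos {a b : ℝ} (ha : 0 ≤ a) (hab : a < b) (hb : b ≤ 3 / 2) :
    0 < absGyroidLaw (Ioc a b) := by
  obtain ⟨t, ht, hgt⟩ := exists_gyroid_const_eq (γ := (a + b) / 2) (by linarith) (by linarith)
  set U := (pi univ fun _ ↦ Ioo 0 1) ∩ (|gyroid ·|) ⁻¹' Ioo a b
  have hU : IsOpen U :=
    (isOpen_set_pi finite_univ fun _ _ ↦ isOpen_Ioo).inter
      (isOpen_Ioo.preimage continuous_gyroid.abs)
  have hUne : U.Nonempty := by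
    refine ⟨fun _ ↦ t, fun _ _ ↦ ht, ?_⟩
    simp only [mem_preimage, hgt, abs_of_pos (by linarith : 0 < (a + b) / 2), mem_Ioo]
    constructor <;> linarith
  calc 0 < volume U := hU.measure_pos volume hUne
    _ ≤ volume ((|gyroid ·|) ⁻¹' Ioc a b ∩ unitCell) := by
      refine measure_mono fun y ⟨hcube, hy⟩ ↦ ⟨Ioo_subset_Ioc_self hy, ?_⟩
      rw [unitCell, ← pi_univ_Icc]
      exact pi_mono (fun _ _ ↦ Ioo_subset_Icc_self) hcube
    _ = absGyroidLaw (Ioc a b) := (absGyroidLaw_apply measurableSet_Ioc).symm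

/-- **Invertibility of the thickness-to-volume map of the Gyroid scaffold.**
The map `ϱ(α) = vol({ y ∈ Y : |f_G(y)| ≤ α })` is strictly increasing on `[0, 3/2]`;
in particular it is a bijection from `[0, 3/2]` onto `[ϱ(0), 1]` and admits an inverse map
`ϱ⁻¹` from volume fractions to thickness parameters. -/
theorem scaffoldVolume_strictMono_bijective :
    StrictMonoOn scaffoldVolume (Set.Icc 0 (3 / 2)) ∧
    Set.BijOn scaffoldVolume (Set.Icc 0 (3 / 2)) (Set.Icc (scaffoldVolume 0) 1) ∧
    ∃ ψ : ℝ → ℝ, Set.InvOn ψ scaffoldVolume (Set.Icc 0 (3 / 2))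
      (Set.Icc (scaffoldVolume 0) 1) := by
  have hmono : StrictMonoOn (cdf absGyroidLaw) (Icc 0 (3 / 2)) := fun a ha b hb hab ↦
    cdf_lt_cdf_of_measure_Ioc_pos _ (absGyroidLaw_Ioc_pos ha.1 hab hb.2)
  have hbij := hmono.bijOn_Icc (by norm_num) (continuous_cdf _).continuousOn
  rw [← scaffoldVolume_eq_cdf, scaffoldVolume_three_halves] at hbij
  rw [← scaffoldVolume_eq_cdf] at hmono
  exact ⟨hmono, hbij, _, hbij.invOn_invFunOn⟩
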